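/- Let d ≥ 2, a ∈ (0,1), N ∈ ℕ, let G = (V_G, E_G) ⊂ ℤ^d be a finite domain, let x ∈ V_G, and let 𝒫 ∈ SAP_x(N) be a self-avoiding polygon with 𝒫 ⊂ G such that the pattern P′ occurs at aN or more steps of 𝒫 (i.e., 𝒫 ∉ SAP_x(N, aN, P′)). Then for all λ, n ∈ (0,∞), Z_{λ,n}(G∖𝒫) / Z_{λ,n}(G) ≤ 1/(1 + λ⁴ n)^{aN}. -/

import Mathlib

open scoped BigOperators ENNReal

/-- Vertices of the lattice `ℤ^d`. -/
abbrev Vtx (d : ℕ) := Fin d → ℤ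

/-- Lattice adjacency: Euclidean distance one. -/
def latAdj {d : ℕ} (x y : Vtx d) : Prop := (∑ i, (x i - y i) ^ 2) = 1

/-- The hypercubic lattice `ℤ^d` as a simple graph. -/
def latticeGraph (d : ℕ) : SimpleGraph (Vtx d) where
  Adj := latAdj
  symm := by
    constructor
    intro x y h
    unfold latAdj at h ⊢
    calc (∑ i, (y i - x i) ^ 2) = ∑ i, (x i - y i) ^ 2 :=
          Finset.sum_congr rfl fun i _ => by ring
      _ = 1 := h
  loopless := by
    constructor
    intro x h
    unfold latAdj at h
    simp at h

/-- The `i`-th standard unit vector of `ℤ^d`. -/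
def stdv (d : ℕ) (i : ℕ) : Vtx d := fun j => if (j : ℕ) = i then 1 else 0

/-- A finite domain: a finite subgraph of the lattice containing all lattice edges
between its vertices. -/
def IsFiniteDomain {d : ℕ} (G : (latticeGraph d).Subgraph) : Prop :=
  G.verts.Finite ∧ ∀ x ∈ G.verts, ∀ y ∈ G.verts, (latticeGraph d).Adj x y → G.Adj x y

/-- `Ω_G`: spanning subgraphs of `G` in which every vertex has degree `0` or `2`. -/
def loopConfigs {d : ℕ} (G : (latticeGraph d).Subgraph) : Set ((latticeGraph d).Subgraph) :=
  {κ | κ ≤ G ∧ κ.verts = G.verts ∧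
    ∀ v ∈ κ.verts, (κ.neighborSet v).ncard = 0 ∨ (κ.neighborSet v).ncard = 2}

/-- `L(κ)`: the number of loops of `κ`, i.e. of connected components containing an edge. -/
noncomputable def numLoops {d : ℕ} (κ : (latticeGraph d).Subgraph) : ℕ :=
  Set.ncard {C : κ.spanningCoe.ConnectedComponent | ∃ e ∈ κ.edgeSet, ∀ v ∈ e, v ∈ C.supp}

/-- The weight `λ^{o(κ)} n^{L(κ)}` of a configuration (with the convention `0^0 = 1`). -/
noncomputable def loopWt {d : ℕ} (lam n : ℝ) (κ : (latticeGraph d).Subgraph) : ℝ :=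
  lam ^ κ.edgeSet.ncard * n ^ numLoops κ

/-- The partition function `Z_{λ,n}(G)`. -/
noncomputable def partitionZ {d : ℕ} (lam n : ℝ) (G : (latticeGraph d).Subgraph) : ℝ :=
  ∑' κ : loopConfigs G, loopWt lam n κ.1

/-- The probability, under the loop `O(n)` measure on `Ω_G`, of an event `A`. -/
noncomputable def probEvent {d : ℕ} (lam n : ℝ) (G : (latticeGraph d).Subgraph)
    (A : (latticeGraph d).Subgraph → Prop) : ℝ :=
  (∑' κ : {κ : (latticeGraph d).Subgraph // κ ∈ loopConfigs G ∧ A κ}, loopWt lam n κ.1) /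
    partitionZ lam n G

/-- The set of edges of the connected component of `x` in `κ`. -/
def compEdgeSet {d : ℕ} (κ : (latticeGraph d).Subgraph) (x : Vtx d) : Set (Sym2 (Vtx d)) :=
  {e | e ∈ κ.edgeSet ∧ ∀ v ∈ e, κ.spanningCoe.Reachable x v}

/-- `|P_x(κ)|`: the number of edges of the connected component of `x` in `κ`. -/
noncomputable def compLen {d : ℕ} (κ : (latticeGraph d).Subgraph) (x : Vtx d) : ℕ :=
  (compEdgeSet κ x).ncard

/-- `P_x(κ)`: the connected component of `x` in `κ`, as a subgraph of the lattice. -/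
def compSubgraph {d : ℕ} (κ : (latticeGraph d).Subgraph) (x : Vtx d) :
    (latticeGraph d).Subgraph where
  verts := {v | v ∈ κ.verts ∧ κ.spanningCoe.Reachable x v}
  Adj u v := κ.Adj u v ∧ κ.spanningCoe.Reachable x u
  adj_sub h := κ.adj_sub h.1
  edge_vert h := ⟨κ.edge_vert h.1, h.2⟩
  symm := by
    constructor
    intro u v h
    exact ⟨h.1.symm, h.2.trans (SimpleGraph.Adj.reachable (G := κ.spanningCoe) h.1)⟩

/-- A self-avoiding walk with `M` vertices (length `M - 1`) starting at `x`. -/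
def IsSAWalk {d M : ℕ} (x : Vtx d) (ω : Fin M → Vtx d) : Prop :=
  (∀ h : 0 < M, ω ⟨0, h⟩ = x) ∧ Function.Injective ω ∧
    ∀ i : ℕ, ∀ h : i + 1 < M, latAdj (ω ⟨i, by omega⟩) (ω ⟨i + 1, h⟩)

/-- A pattern: a finite walk `(p 0, …, p len)` (to be used as a self-avoiding walk). -/
structure SAWPattern (d : ℕ) where
  len : ℕ
  p : Fin (len + 1) → Vtx d

/-- The pattern `P` occurs at step `j` of the walk `ω`. -/
def occursAt {d M : ℕ} (P : SAWPattern d) (ω : Fin M → Vtx d) (j : ℕ) : Prop :=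
  ∃ (h : j + P.len + 1 ≤ M) (v : Vtx d), ∀ k : Fin (P.len + 1),
    ω ⟨j + k.1, by have hk := k.2; omega⟩ = P.p k + v

/-- The number of steps of `ω` at which the pattern `P` occurs. -/
noncomputable def numOcc {d M : ℕ} (P : SAWPattern d) (ω : Fin M → Vtx d) : ℕ :=
  Set.ncard {j : ℕ | occursAt P ω j}

/-- A proper internal pattern: for every `k` there is a self-avoiding walk on which the
pattern occurs at `k` or more different steps. -/
def ProperInternal {d : ℕ} (P : SAWPattern d) : Prop :=
  ∀ k : ℕ, ∃ (x : Vtx d) (M : ℕ) (ω : Fin (M + 1) → Vtx d), IsSAWalk x ω ∧ k ≤ numOcc P ω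

/-- `|SAW_x(N)|`: the number of `N`-step self-avoiding walks starting at `x`. -/
noncomputable def numSAW (d : ℕ) (x : Vtx d) (N : ℕ) : ℕ :=
  Nat.card {ω : Fin (N + 1) → Vtx d // IsSAWalk x ω}

/-- `|SAW_x[N, w, P]|`: the number of `N`-step self-avoiding walks starting at `x` on which
the pattern `P` occurs at fewer than `w` steps. -/
noncomputable def numSAWFewOcc (d : ℕ) (x : Vtx d) (N : ℕ) (w : ℝ) (P : SAWPattern d) : ℕ :=
  Nat.card {ω : Fin (N + 1) → Vtx d // IsSAWalk x ω ∧ (numOcc P ω : ℝ) < w}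

/-- The connective constant `μ(ℤ^d) = lim_N |SAW_0(N)|^{1/N}` (the limit exists, hence
equals the `limsup`). -/
noncomputable def connConst (d : ℕ) : ℝ :=
  Filter.limsup (fun N : ℕ => (numSAW d 0 N : ℝ) ^ ((N : ℝ)⁻¹)) Filter.atTop

/-- The pattern `P' = (o, e₂, e₁ + e₂, e₁)`. -/
def patternP' (d : ℕ) : SAWPattern d :=
  ⟨3, ![0, stdv d 1, stdv d 0 + stdv d 1, stdv d 0]⟩

/-- `P ∈ SAP_x(N)`: `P` is an `N`-step self-avoiding polygon one of whose vertices is `x`;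
for `N = 1` the degenerate polygon `{x}`, for `N ≥ 4` a single cycle with `N` vertices and
`N` edges. -/
def IsSAP {d : ℕ} (x : Vtx d) (N : ℕ) (P : (latticeGraph d).Subgraph) : Prop :=
  (N = 1 ∧ P.verts = {x} ∧ P.edgeSet = ∅) ∨
  (4 ≤ N ∧ x ∈ P.verts ∧ P.verts.ncard = N ∧ P.edgeSet.ncard = N ∧
    (∀ v ∈ P.verts, (P.neighborSet v).ncard = 2) ∧
    ∀ u ∈ P.verts, ∀ v ∈ P.verts, P.spanningCoe.Reachable u v)

/-- The walk `ω` (with `N` vertices) traces the `N`-step self-avoiding polygon `P`,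
starting at `x`. -/
def Traces {d : ℕ} (x : Vtx d) (N : ℕ) (P : (latticeGraph d).Subgraph)
    (ω : Fin N → Vtx d) : Prop :=
  IsSAWalk x ω ∧ (∀ v, v ∈ P.verts ↔ ∃ i, ω i = v) ∧
    (∀ i : ℕ, ∀ h : i + 1 < N, P.Adj (ω ⟨i, by omega⟩) (ω ⟨i + 1, h⟩)) ∧
    ∀ h : 0 < N, P.Adj (ω ⟨N - 1, by omega⟩) (ω ⟨0, h⟩)

/-- `G ∖ P`: the subgraph of `G` induced on `V_G ∖ V_P`. -/
def graphDiff {d : ℕ} (G P : (latticeGraph d).Subgraph) : (latticeGraph d).Subgraph where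
  verts := G.verts \ P.verts
  Adj u v := G.Adj u v ∧ u ∉ P.verts ∧ v ∉ P.verts
  adj_sub h := G.adj_sub h.1
  edge_vert h := ⟨G.edge_vert h.1, h.2.1⟩
  symm := ⟨fun _ _ h => ⟨h.1.symm, h.2.2, h.2.1⟩⟩

/-- The subgraph of `G` induced on a vertex set `S` (used for `U(P)` with `S = V_P`). -/
def inducedOn {d : ℕ} (G : (latticeGraph d).Subgraph) (S : Set (Vtx d)) :
    (latticeGraph d).Subgraph where
  verts := S
  Adj u v := G.Adj u v ∧ u ∈ S ∧ v ∈ S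
  adj_sub h := G.adj_sub h.1
  edge_vert h := h.2.1
  symm := ⟨fun _ _ h => ⟨h.1.symm, h.2.2, h.2.1⟩⟩

/-- The unit-square polygon with corner `x`: vertices `x, x+e₁, x+e₂, x+e₁+e₂` and the
four lattice edges between them. -/
def unitSquare (d : ℕ) (x : Vtx d) : (latticeGraph d).Subgraph where
  verts := {x, x + stdv d 0, x + stdv d 1, x + stdv d 0 + stdv d 1}
  Adj u v := (latticeGraph d).Adj u v ∧
    u ∈ ({x, x + stdv d 0, x + stdv d 1, x + stdv d 0 + stdv d 1} : Set (Vtx d)) ∧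
    v ∈ ({x, x + stdv d 0, x + stdv d 1, x + stdv d 0 + stdv d 1} : Set (Vtx d))
  adj_sub h := h.1
  edge_vert h := h.2.1
  symm := ⟨fun _ _ h => ⟨h.1.symm, h.2.2, h.2.1⟩⟩

/-- `E_{G,λ,n}[e^{δ |P_x|}]`. -/
noncomputable def expMoment {d : ℕ} (δ lam n : ℝ) (G : (latticeGraph d).Subgraph)
    (x : Vtx d) : ℝ :=
  (∑' κ : loopConfigs G, Real.exp (δ * (compLen κ.1 x : ℝ)) * loopWt lam n κ.1) /
    partitionZ lam n G

/-- `L(δ, λ, n)`: the supremum of `E_{G,λ,n}[e^{δ |P_x|}]` over finite domains `G ⊆ ℤ^d`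
and `x ∈ V_G`, valued in `[0,∞]`. -/
noncomputable def mathcalL (d : ℕ) (δ lam n : ℝ) : ℝ≥0∞ :=
  ⨆ (G : (latticeGraph d).Subgraph) (_ : IsFiniteDomain G) (x : Vtx d) (_ : x ∈ G.verts),
    ENNReal.ofReal (expMoment δ lam n G x)

/-- `λ_c(n) = sup {λ ≥ 0 : L(δ,λ,n) < ∞ for some δ > 0}`, valued in `[0,∞]`. -/
noncomputable def lambdaC (d : ℕ) (n : ℝ) : ℝ≥0∞ :=
  ⨆ (lam : ℝ) (_ : 0 ≤ lam ∧ ∃ δ : ℝ, 0 < δ ∧ mathcalL d δ lam n < ⊤),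
    ENNReal.ofReal lam

/-!
Every occurrence of `P'` at step `j` of the walk tracing `𝒫` marks a unit square whose four
corners are the vertices `j, …, j + 3` of `𝒫`. The steps of `P'` are `+e₂, +e₁, -e₂`, so a
second occurrence within three steps would either start with `+e₂` where the walk steps `+e₁` or
`-e₂`, or make the walk backtrack; hence occurrences are at least four steps apart and the
squares are vertex-disjoint. Given a loop configuration on `G ∖ 𝒫` and a set `S` of these squares,
adding the squares of `S` as loops yields a configuration on `G` whose weight is multiplied by
`(λ⁴ n)^|S|`, and the configuration together with `S` can be read off from the result. Summing
over all `S` gives `Z(G ∖ 𝒫) (1 + λ⁴ n)^k ≤ Z(G)`, where `k ≥ aN` is the number of occurrences.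
-/

open SimpleGraph

namespace SimpleGraph.Subgraph

variable {V ι : Type*} {G : SimpleGraph V} {H H₁ H₂ : G.Subgraph} {u v : V}

def DegreeZeroOrTwo (H : G.Subgraph) : Prop :=
  ∀ v ∈ H.verts, (H.neighborSet v).ncard = 0 ∨ (H.neighborSet v).ncard = 2

lemma neighborSet_eq_empty_of_notMem_support (hv : v ∉ H.support) : H.neighborSet v = ∅ :=
  Set.eq_empty_of_forall_notMem fun w hw => hv ⟨w, hw⟩

lemma support_sup : (H₁ ⊔ H₂).support = H₁.support ∪ H₂.support := by
  ext v
  simp only [mem_support, sup_adj, Set.mem_union, exists_or]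

lemma neighborSet_sup_of_notMem_support (hv : v ∉ H₂.support) :
    (H₁ ⊔ H₂).neighborSet v = H₁.neighborSet v := by
  rw [neighborSet_sup, neighborSet_eq_empty_of_notMem_support hv, Set.union_empty]

lemma DegreeZeroOrTwo.sup (h₁ : H₁.DegreeZeroOrTwo) (h₂ : H₂.DegreeZeroOrTwo)
    (hdisj : Disjoint H₁.support H₂.support) : (H₁ ⊔ H₂).DegreeZeroOrTwo := by
  intro v hv
  by_cases hv₂ : v ∈ H₂.support
  · rw [sup_comm, neighborSet_sup_of_notMem_support (Set.disjoint_right.1 hdisj hv₂)]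
    exact h₂ v (H₂.support_subset_verts hv₂)
  · rw [neighborSet_sup_of_notMem_support hv₂]
    by_cases hv₁ : v ∈ H₁.verts
    · exact h₁ v hv₁
    · left
      rw [neighborSet_eq_empty_of_notMem_support fun h => hv₁ (H₁.support_subset_verts h),
        Set.ncard_empty]

lemma reachable_of_reachable_sup (hdisj : Disjoint H₁.support H₂.support)
    (hu : u ∉ H₂.support) (h : (H₁ ⊔ H₂).spanningCoe.Reachable u v) :
    H₁.spanningCoe.Reachable u v ∧ v ∉ H₂.support := by
  obtain ⟨p⟩ := h
  induction p with
  | nil => exact ⟨.rfl, hu⟩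
  | @cons u w v hadj _ ih =>
    have hadj₁ : H₁.Adj u w := (sup_adj.1 hadj).resolve_right fun h => hu ⟨w, h⟩
    obtain ⟨hreach, hv⟩ := ih (Set.disjoint_left.1 hdisj ⟨u, hadj₁.symm⟩)
    exact ⟨(Adj.reachable (G := H₁.spanningCoe) hadj₁).trans hreach, hv⟩

lemma reachable_spanningCoe_of_connected (hH : H.Connected) (hu : u ∈ H.verts)
    (hv : v ∈ H.verts) : H.spanningCoe.Reachable u v :=
  (hH ⟨u, hu⟩ ⟨v, hv⟩).map ⟨Subtype.val, fun h => h⟩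

lemma edgeSet_finite_of_verts_finite (hH : H.verts.Finite) : H.edgeSet.Finite := by
  refine ((hH.prod hH).image fun p => s(p.1, p.2)).subset ?_
  rintro ⟨u, v⟩ he
  exact ⟨(u, v), ⟨H.edge_vert he, H.edge_vert he.symm⟩, rfl⟩

lemma support_bot : (⊥ : G.Subgraph).support = ∅ :=
  Set.eq_empty_of_forall_notMem fun _ h => ((Subgraph.mem_support _).1 h).elim fun _ => not_bot_adj

lemma support_finset_sup (S : Finset ι) (Q : ι → G.Subgraph) :
    (S.sup Q).support = ⋃ j ∈ S, (Q j).support := by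
  classical
  induction S using Finset.induction_on with
  | empty => simp [support_bot]
  | insert j S _ ih => rw [Finset.sup_insert, support_sup, ih, Finset.set_biUnion_insert]

variable {Q : ι → G.Subgraph} {J S : Finset ι}

lemma disjoint_support_finset_sup (hdisj : (J : Set ι).PairwiseDisjoint fun j => (Q j).support)
    {j : ι} (hj : j ∈ J) (hS : S ⊆ J) (hjS : j ∉ S) :
    Disjoint (Q j).support (S.sup Q).support := by
  rw [support_finset_sup, Set.disjoint_iUnion₂_right]
  exact fun j' hj' => hdisj hj (hS hj') fun h => hjS (h ▸ hj')

lemma DegreeZeroOrTwo.finset_sup [DecidableEq ι] (hQ : ∀ j ∈ J, (Q j).DegreeZeroOrTwo)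
    (hdisj : (J : Set ι).PairwiseDisjoint fun j => (Q j).support) (hS : S ⊆ J) :
    (S.sup Q).DegreeZeroOrTwo := by
  induction S using Finset.induction_on with
  | empty => exact fun v hv => hv.elim
  | insert j S hjS ih =>
    have hj : j ∈ J := hS (Finset.mem_insert_self j S)
    have hS' : S ⊆ J := (Finset.subset_insert j S).trans hS
    rw [Finset.sup_insert]
    exact (hQ j hj).sup (ih hS') (disjoint_support_finset_sup hdisj hj hS' hjS)

end SimpleGraph.Subgraph

namespace SimpleGraph.Walk

variable {V : Type*} {G : SimpleGraph V} {u : V}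

lemma IsCycle.degreeZeroOrTwo_toSubgraph {p : G.Walk u u} (hp : p.IsCycle) :
    p.toSubgraph.DegreeZeroOrTwo :=
  fun _ hv => Or.inr (hp.ncard_neighborSet_toSubgraph_eq_two (p.mem_verts_toSubgraph.1 hv))

end SimpleGraph.Walk

open Subgraph

section Loops

variable {d : ℕ} {H H₁ H₂ : (latticeGraph d).Subgraph} {lam n : ℝ}

lemma numLoops_eq_ncard_image_support (H : (latticeGraph d).Subgraph) :
    numLoops H = (H.spanningCoe.connectedComponentMk '' H.support).ncard := by
  unfold numLoops
  congr 1
  ext C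
  constructor
  · rintro ⟨⟨u, v⟩, he, hC⟩
    exact ⟨u, ⟨v, he⟩, (ConnectedComponent.mem_supp_iff C u).1 (hC u (Sym2.mem_mk_left u v))⟩
  · rintro ⟨u, ⟨v, huv⟩, rfl⟩
    refine ⟨s(u, v), huv, fun w hw => ?_⟩
    rcases Sym2.mem_iff.1 hw with rfl | rfl
    · rfl
    · exact ConnectedComponent.eq.2 (Adj.reachable (G := H.spanningCoe) huv.symm)

lemma ncard_image_support_sup (hdisj : Disjoint H₁.support H₂.support) :
    ((H₁ ⊔ H₂).spanningCoe.connectedComponentMk '' H₁.support).ncard = numLoops H₁ := by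
  let φ := ConnectedComponent.map (Hom.ofLE (spanningCoe_le_of_le (le_sup_left : H₁ ≤ H₁ ⊔ H₂)))
  have himage : (H₁ ⊔ H₂).spanningCoe.connectedComponentMk '' H₁.support
      = φ '' (H₁.spanningCoe.connectedComponentMk '' H₁.support) := by
    rw [Set.image_image]
    rfl
  rw [himage, numLoops_eq_ncard_image_support, Set.InjOn.ncard_image]
  rintro _ ⟨u, hu, rfl⟩ _ ⟨w, -, rfl⟩ h
  exact ConnectedComponent.eq.2 (reachable_of_reachable_sup hdisj
    (Set.disjoint_left.1 hdisj hu) (ConnectedComponent.eq.1 h)).1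

lemma numLoops_sup (hdisj : Disjoint H₁.support H₂.support) (h₁ : H₁.support.Finite)
    (h₂ : H₂.support.Finite) : numLoops (H₁ ⊔ H₂) = numLoops H₁ + numLoops H₂ := by
  have hcomm := ncard_image_support_sup hdisj.symm
  rw [sup_comm] at hcomm
  rw [numLoops_eq_ncard_image_support, support_sup, Set.image_union,
    Set.ncard_union_eq _ ((h₁.image _)) (h₂.image _), ncard_image_support_sup hdisj, hcomm]
  rw [Set.disjoint_left]
  rintro _ ⟨u, hu, rfl⟩ ⟨w, hw, h⟩
  exact (reachable_of_reachable_sup hdisj (Set.disjoint_left.1 hdisj hu)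
    (ConnectedComponent.eq.1 h.symm)).2 hw

lemma numLoops_eq_one_of_connected (hH : H.Connected) (hne : H.support.Nonempty) :
    numLoops H = 1 := by
  obtain ⟨u, hu⟩ := hne
  rw [numLoops_eq_ncard_image_support, Set.ncard_eq_one]
  refine ⟨H.spanningCoe.connectedComponentMk u,
    Set.eq_singleton_iff_unique_mem.2 ⟨⟨u, hu, rfl⟩, ?_⟩⟩
  rintro _ ⟨w, hw, rfl⟩
  exact ConnectedComponent.eq.2 (reachable_spanningCoe_of_connected hH
    (H.support_subset_verts hw) (H.support_subset_verts hu))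

lemma loopWt_sup (hdisj : Disjoint H₁.support H₂.support) (h₁ : H₁.verts.Finite)
    (h₂ : H₂.verts.Finite) : loopWt lam n (H₁ ⊔ H₂) = loopWt lam n H₁ * loopWt lam n H₂ := by
  have hedges : Disjoint H₁.edgeSet H₂.edgeSet := by
    rw [Set.disjoint_left]
    rintro ⟨u, v⟩ he₁ he₂
    exact Set.disjoint_left.1 hdisj ⟨v, he₁⟩ ⟨v, he₂⟩
  unfold loopWt
  rw [Subgraph.edgeSet_sup, Set.ncard_union_eq hedges (edgeSet_finite_of_verts_finite h₁)
    (edgeSet_finite_of_verts_finite h₂), numLoops_sup hdisj (h₁.subset H₁.support_subset_verts)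
    (h₂.subset H₂.support_subset_verts)]
  ring

lemma loopWt_eq_one_of_support_eq_empty {H : (latticeGraph d).Subgraph} (h : H.support = ∅) :
    loopWt lam n H = 1 := by
  have hedges : H.edgeSet = ∅ := Set.eq_empty_of_forall_notMem fun e he => by
    induction e with
    | _ u v => exact Set.eq_empty_iff_forall_notMem.1 h u ⟨v, he⟩
  rw [loopWt, numLoops_eq_ncard_image_support, h, hedges]
  simp

lemma loopWt_nonneg (hlam : 0 ≤ lam) (hn : 0 ≤ n) (H : (latticeGraph d).Subgraph) :
    0 ≤ loopWt lam n H :=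
  mul_nonneg (pow_nonneg hlam _) (pow_nonneg hn _)

end Loops

section Configurations

variable {d : ℕ} {G P κ σ : (latticeGraph d).Subgraph} {lam n : ℝ}

def edgelessOn (V : Set (Vtx d)) : (latticeGraph d).Subgraph where
  verts := V
  Adj _ _ := False
  adj_sub h := h.elim
  edge_vert h := h.elim
  symm := ⟨fun _ _ h => h⟩

lemma support_edgelessOn (V : Set (Vtx d)) : (edgelessOn V).support = ∅ :=
  Set.eq_empty_of_forall_notMem fun _ h => ((Subgraph.mem_support _).1 h).elim fun _ h => h

lemma disjoint_support_edgelessOn (V : Set (Vtx d)) (H : (latticeGraph d).Subgraph) :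
    Disjoint (edgelessOn V).support H.support := by
  rw [support_edgelessOn]
  exact Set.empty_disjoint _

lemma support_edgelessOn_sup (V : Set (Vtx d)) (H : (latticeGraph d).Subgraph) :
    (edgelessOn V ⊔ H).support = H.support := by
  rw [support_sup, support_edgelessOn, Set.empty_union]

lemma graphDiff_le (G P : (latticeGraph d).Subgraph) : graphDiff G P ≤ G :=
  ⟨Set.sdiff_subset, fun _ _ h => h.1⟩

lemma edgelessOn_mem_loopConfigs (G : (latticeGraph d).Subgraph) :
    edgelessOn G.verts ∈ loopConfigs G :=
  ⟨⟨subset_rfl, fun _ _ h => h.elim⟩, rfl, fun v _ => Or.inl (by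
    rw [neighborSet_eq_empty_of_notMem_support (by simp [support_edgelessOn]), Set.ncard_empty])⟩

lemma sup_mem_loopConfigs (hκ : κ ∈ loopConfigs G) (hσG : σ ≤ G)
    (hσ : σ.DegreeZeroOrTwo) (hdisj : Disjoint κ.support σ.support) :
    κ ⊔ σ ∈ loopConfigs G :=
  ⟨sup_le hκ.1 hσG, by rw [verts_sup, hκ.2.1, Set.union_eq_left.2 hσG.1],
    DegreeZeroOrTwo.sup hκ.2.2 hσ hdisj⟩

lemma loopConfigs_finite (hG : G.verts.Finite) : (loopConfigs G).Finite := by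
  refine Set.Finite.of_finite_image (f := Subgraph.edgeSet)
    ((edgeSet_finite_of_verts_finite hG).finite_subsets.subset ?_) ?_
  · rintro _ ⟨κ, hκ, rfl⟩
    exact edgeSet_mono hκ.1
  · rintro κ₁ hκ₁ κ₂ hκ₂ h
    ext u v
    · rw [hκ₁.2.1, hκ₂.2.1]
    · rw [← Subgraph.mem_edgeSet, ← Subgraph.mem_edgeSet, h]

lemma partitionZ_eq_sum (hG : G.verts.Finite) :
    partitionZ lam n G = ∑ κ ∈ (loopConfigs_finite hG).toFinset, loopWt lam n κ := by
  rw [partitionZ, tsum_subtype, tsum_eq_sum (s := (loopConfigs_finite hG).toFinset)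
    fun κ hκ => Set.indicator_of_notMem (by simpa using hκ) _]
  exact Finset.sum_congr rfl fun κ hκ => Set.indicator_of_mem (by simpa using hκ) _

lemma sum_loopWt_le_partitionZ (hG : G.verts.Finite) (hlam : 0 ≤ lam) (hn : 0 ≤ n)
    {s : Finset (latticeGraph d).Subgraph} (hs : ∀ τ ∈ s, τ ∈ loopConfigs G) :
    ∑ τ ∈ s, loopWt lam n τ ≤ partitionZ lam n G := by
  rw [partitionZ_eq_sum hG]
  exact Finset.sum_le_sum_of_subset_of_nonneg (fun τ hτ => by simpa using hs τ hτ)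
    fun τ _ _ => loopWt_nonneg hlam hn τ

lemma one_le_partitionZ (hG : G.verts.Finite) (hlam : 0 ≤ lam) (hn : 0 ≤ n) :
    1 ≤ partitionZ lam n G := by
  simpa [loopWt_eq_one_of_support_eq_empty (support_edgelessOn _)] using
    sum_loopWt_le_partitionZ hG hlam hn (s := {edgelessOn G.verts})
      (by simpa using edgelessOn_mem_loopConfigs G)

end Configurations

section Insertion

variable {d : ℕ} {ι : Type*} {G P κ : (latticeGraph d).Subgraph}
  {Q : ι → (latticeGraph d).Subgraph} {J S : Finset ι} {lam n : ℝ}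

lemma loopWt_finset_sup [DecidableEq ι] (hG : G.verts.Finite) (hQG : ∀ j ∈ J, Q j ≤ G)
    (hdisj : (J : Set ι).PairwiseDisjoint fun j => (Q j).support) (hS : S ⊆ J) :
    loopWt lam n (S.sup Q) = ∏ j ∈ S, loopWt lam n (Q j) := by
  induction S using Finset.induction_on with
  | empty => exact loopWt_eq_one_of_support_eq_empty Subgraph.support_bot
  | insert j S hjS ih =>
    have hj : j ∈ J := hS (Finset.mem_insert_self j S)
    have hS' : S ⊆ J := (Finset.subset_insert j S).trans hS
    rw [Finset.sup_insert, Finset.prod_insert hjS, ← ih hS',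
      loopWt_sup (disjoint_support_finset_sup hdisj hj hS' hjS) (hG.subset (hQG j hj).1)
        (hG.subset (Finset.sup_le fun j' hj' => hQG j' (hS' hj')).1)]

/-- `κ` is a configuration on `G ∖ P`; the summand `edgelessOn G.verts` restores the vertices
of `P`, so that the result spans `G`. -/
def insertLoops (G κ : (latticeGraph d).Subgraph) (Q : ι → (latticeGraph d).Subgraph)
    (S : Finset ι) : (latticeGraph d).Subgraph :=
  edgelessOn G.verts ⊔ κ ⊔ S.sup Q

lemma support_subset_of_mem_loopConfigs_graphDiff (hκ : κ ∈ loopConfigs (graphDiff G P)) :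
    κ.support ⊆ G.verts \ P.verts :=
  κ.support_subset_verts.trans hκ.2.1.subset

lemma support_finset_sup_subset (hQP : ∀ j ∈ J, (Q j).support ⊆ P.verts) (hS : S ⊆ J) :
    (S.sup Q).support ⊆ P.verts := by
  rw [support_finset_sup]
  exact Set.iUnion₂_subset fun j hj => hQP j (hS hj)

lemma support_insertLoops (G κ : (latticeGraph d).Subgraph) (Q : ι → (latticeGraph d).Subgraph)
    (S : Finset ι) : (insertLoops G κ Q S).support = κ.support ∪ (S.sup Q).support := by
  rw [insertLoops, support_sup, support_edgelessOn_sup]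

lemma disjoint_support_of_mem_loopConfigs_graphDiff (hκ : κ ∈ loopConfigs (graphDiff G P))
    (hQP : ∀ j ∈ J, (Q j).support ⊆ P.verts) (hS : S ⊆ J) :
    Disjoint κ.support (S.sup Q).support :=
  Set.disjoint_of_subset (support_subset_of_mem_loopConfigs_graphDiff hκ)
    (support_finset_sup_subset hQP hS) Set.disjoint_sdiff_left

lemma insertLoops_mem_loopConfigs [DecidableEq ι] (hκ : κ ∈ loopConfigs (graphDiff G P))
    (hQG : ∀ j ∈ J, Q j ≤ G) (hQ : ∀ j ∈ J, (Q j).DegreeZeroOrTwo)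
    (hQP : ∀ j ∈ J, (Q j).support ⊆ P.verts)
    (hdisj : (J : Set ι).PairwiseDisjoint fun j => (Q j).support) (hS : S ⊆ J) :
    insertLoops G κ Q S ∈ loopConfigs G := by
  refine sup_mem_loopConfigs ?_ (Finset.sup_le fun j hj => hQG j (hS hj))
    (DegreeZeroOrTwo.finset_sup hQ hdisj hS) ?_
  · exact sup_mem_loopConfigs (edgelessOn_mem_loopConfigs G) (hκ.1.trans (graphDiff_le G P))
      hκ.2.2 (disjoint_support_edgelessOn _ _)
  · rw [support_edgelessOn_sup]
    exact disjoint_support_of_mem_loopConfigs_graphDiff hκ hQP hS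

lemma loopWt_insertLoops [DecidableEq ι] (hG : G.verts.Finite)
    (hκ : κ ∈ loopConfigs (graphDiff G P)) (hQG : ∀ j ∈ J, Q j ≤ G)
    (hQP : ∀ j ∈ J, (Q j).support ⊆ P.verts)
    (hdisj : (J : Set ι).PairwiseDisjoint fun j => (Q j).support) (hS : S ⊆ J) :
    loopWt lam n (insertLoops G κ Q S) = loopWt lam n κ * ∏ j ∈ S, loopWt lam n (Q j) := by
  have hκG : κ ≤ G := hκ.1.trans (graphDiff_le G P)
  rw [insertLoops, loopWt_sup, loopWt_sup,
    loopWt_eq_one_of_support_eq_empty (support_edgelessOn _), one_mul,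
    loopWt_finset_sup hG hQG hdisj hS]
  · exact disjoint_support_edgelessOn _ _
  · exact hG
  · exact hG.subset hκG.1
  · rw [support_edgelessOn_sup]
    exact disjoint_support_of_mem_loopConfigs_graphDiff hκ hQP hS
  · exact hG.subset (Set.union_subset subset_rfl hκG.1)
  · exact hG.subset (Finset.sup_le fun j hj => hQG j (hS hj)).1

lemma adj_iff_adj_insertLoops (hκ : κ ∈ loopConfigs (graphDiff G P))
    (hQP : ∀ j ∈ J, (Q j).support ⊆ P.verts) (hS : S ⊆ J) {u v : Vtx d} :
    κ.Adj u v ↔ (insertLoops G κ Q S).Adj u v ∧ u ∉ P.verts := by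
  refine ⟨fun h => ⟨sup_adj.2 (Or.inl (sup_adj.2 (Or.inr h))), (hκ.1.2 h).2.1⟩, ?_⟩
  rintro ⟨(h | h) | h, hu⟩
  · exact h.elim
  · exact h
  · exact (hu (support_finset_sup_subset hQP hS ⟨v, h⟩)).elim

lemma mem_support_insertLoops_iff (hκ : κ ∈ loopConfigs (graphDiff G P))
    (hQP : ∀ j ∈ J, (Q j).support ⊆ P.verts)
    (hdisj : (J : Set ι).PairwiseDisjoint fun j => (Q j).support) (hS : S ⊆ J)
    {j : ι} (hj : j ∈ J) {v : Vtx d} (hv : v ∈ (Q j).support) :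
    v ∈ (insertLoops G κ Q S).support ↔ j ∈ S := by
  rw [support_insertLoops, support_finset_sup]
  simp only [Set.mem_union, Set.mem_iUnion₂]
  refine ⟨?_, fun hjS => Or.inr ⟨j, hjS, hv⟩⟩
  rintro (hvκ | ⟨j', hj'S, hvj'⟩)
  · exact ((support_subset_of_mem_loopConfigs_graphDiff hκ hvκ).2 (hQP j hj hv)).elim
  · by_contra hjS
    exact Set.disjoint_left.1 (hdisj hj (hS hj'S) fun h => hjS (h ▸ hj'S)) hv hvj'


lemma insertLoops_injOn (hQP : ∀ j ∈ J, (Q j).support ⊆ P.verts)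
    (hne : ∀ j ∈ J, (Q j).support.Nonempty)
    (hdisj : (J : Set ι).PairwiseDisjoint fun j => (Q j).support) :
    Set.InjOn (fun p => insertLoops G p.1 Q p.2) (loopConfigs (graphDiff G P) ×ˢ
      {S | S ⊆ J}) := by
  rintro ⟨κ, S⟩ ⟨hκ, hS⟩ ⟨κ', S'⟩ ⟨hκ', hS'⟩ h
  simp only at h
  have hS : S ⊆ J := hS
  have hS' : S' ⊆ J := hS'
  have hκκ' : κ = κ' := by
    ext u v
    · rw [hκ.2.1, hκ'.2.1]
    · rw [adj_iff_adj_insertLoops hκ hQP hS, adj_iff_adj_insertLoops hκ' hQP hS', h]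
  have hSS' : S = S' := by
    ext j
    by_cases hj : j ∈ J
    · obtain ⟨v, hv⟩ := hne j hj
      rw [← mem_support_insertLoops_iff hκ hQP hdisj hS hj hv,
        ← mem_support_insertLoops_iff hκ' hQP hdisj hS' hj hv, h]
    · exact iff_of_false (fun h => hj (hS h)) fun h => hj (hS' h)
  rw [hκκ', hSS']

theorem partitionZ_graphDiff_mul_prod_le [DecidableEq ι] (hG : G.verts.Finite)
    (hlam : 0 ≤ lam) (hn : 0 ≤ n) (hQG : ∀ j ∈ J, Q j ≤ G)
    (hQ : ∀ j ∈ J, (Q j).DegreeZeroOrTwo) (hQP : ∀ j ∈ J, (Q j).support ⊆ P.verts)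
    (hne : ∀ j ∈ J, (Q j).support.Nonempty)
    (hdisj : (J : Set ι).PairwiseDisjoint fun j => (Q j).support) :
    partitionZ lam n (graphDiff G P) * ∏ j ∈ J, (1 + loopWt lam n (Q j))
      ≤ partitionZ lam n G := by
  classical
  have hG' : (graphDiff G P).verts.Finite := hG.subset (graphDiff_le G P).1
  set Ω' := (loopConfigs_finite hG').toFinset
  set Φ := fun p : (latticeGraph d).Subgraph × Finset ι => insertLoops G p.1 Q p.2
  have hinj : Set.InjOn Φ (Ω' ×ˢ J.powerset : Finset _) :=
    (insertLoops_injOn hQP hne hdisj).mono fun p hp => by simpa [Ω'] using hp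
  calc partitionZ lam n (graphDiff G P) * ∏ j ∈ J, (1 + loopWt lam n (Q j))
      = ∑ κ ∈ Ω', ∑ S ∈ J.powerset, loopWt lam n κ * ∏ j ∈ S, loopWt lam n (Q j) := by
        rw [partitionZ_eq_sum hG', Finset.prod_one_add, Finset.sum_mul_sum]
    _ = ∑ p ∈ Ω' ×ˢ J.powerset, loopWt lam n (Φ p) := by
        rw [Finset.sum_product]
        refine Finset.sum_congr rfl fun κ hκ => Finset.sum_congr rfl fun S hS => ?_
        exact (loopWt_insertLoops hG (by simpa [Ω'] using hκ) hQG hQP hdisj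
          (Finset.mem_powerset.1 hS)).symm
    _ = ∑ τ ∈ (Ω' ×ˢ J.powerset).image Φ, loopWt lam n τ := (Finset.sum_image hinj).symm
    _ ≤ partitionZ lam n G := by
        refine sum_loopWt_le_partitionZ hG hlam hn fun τ hτ => ?_
        obtain ⟨⟨κ, S⟩, hp, rfl⟩ := Finset.mem_image.1 hτ
        rw [Finset.mem_product, Finset.mem_powerset] at hp
        exact insertLoops_mem_loopConfigs (by simpa [Ω'] using hp.1) hQG hQ hQP hdisj hp.2

end Insertion

section Cycles

variable {d : ℕ} {u v : Vtx d} {lam n : ℝ}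

lemma loopWt_toSubgraph_of_isCycle {p : (latticeGraph d).Walk u u} (hp : p.IsCycle) :
    loopWt lam n p.toSubgraph = lam ^ p.length * n := by
  classical
  have hedges : p.toSubgraph.edgeSet.ncard = p.length := by
    rw [Walk.edgeSet_toSubgraph, Walk.edgeSet, ← List.coe_toFinset, Set.ncard_coe_finset,
      List.toFinset_card_of_nodup hp.edges_nodup, Walk.length_edges]
  have hloops : numLoops p.toSubgraph = 1 :=
    numLoops_eq_one_of_connected p.toSubgraph_connected
      ⟨u, p.snd, p.toSubgraph_adj_snd hp.not_nil⟩
  rw [loopWt, hedges, hloops, pow_one]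

lemma toSubgraph_le_of_isFiniteDomain {G : (latticeGraph d).Subgraph} (hG : IsFiniteDomain G)
    {p : (latticeGraph d).Walk u v} (hp : ∀ w ∈ p.support, w ∈ G.verts) : p.toSubgraph ≤ G :=
  ⟨fun _ hw => hp _ (p.mem_verts_toSubgraph.1 hw), fun _ _ h =>
    hG.2 _ (hp _ (p.mem_verts_toSubgraph.1 (p.toSubgraph.edge_vert h))) _
      (hp _ (p.mem_verts_toSubgraph.1 (p.toSubgraph.edge_vert h.symm))) (p.toSubgraph.adj_sub h)⟩

end Cycles

section Square

variable {d : ℕ}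

lemma latticeGraph_adj_stdv_add {k : ℕ} (hk : k < d) (y : Vtx d) :
    (latticeGraph d).Adj y (stdv d k + y) := by
  change ∑ i, (y i - (stdv d k + y) i) ^ 2 = 1
  simp only [Pi.add_apply, stdv, sub_add_cancel_right, neg_sq, ite_pow, one_pow,
    zero_pow two_ne_zero]
  rw [Finset.sum_ite, Finset.sum_const_zero, add_zero, Finset.sum_const, nsmul_one,
    Finset.card_eq_one.2 ⟨⟨k, hk⟩, by ext i; simp [Fin.ext_iff]⟩, Nat.cast_one]

def squareWalk (hd : 2 ≤ d) (b : Vtx d) : (latticeGraph d).Walk b b :=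
  have h₀ : 0 < d := by omega
  have h₁ : 1 < d := by omega
  .cons (latticeGraph_adj_stdv_add h₁ b) <|
  .cons (v := stdv d 0 + stdv d 1 + b) (by rw [add_assoc]; exact latticeGraph_adj_stdv_add h₀ _) <|
  .cons (by rw [add_assoc, add_left_comm]; exact (latticeGraph_adj_stdv_add h₁ _).symm) <|
  .cons (latticeGraph_adj_stdv_add h₀ b).symm .nil

lemma length_squareWalk (hd : 2 ≤ d) (b : Vtx d) : (squareWalk hd b).length = 4 := rfl

lemma squareWalk_isCycle (hd : 2 ≤ d) (b : Vtx d) : (squareWalk hd b).IsCycle := by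
  have h₀ : 0 < d := by omega
  have h₁ : 1 < d := by omega
  have hne : ∀ {x y : Vtx d}, x ⟨0, h₀⟩ ≠ y ⟨0, h₀⟩ ∨ x ⟨1, h₁⟩ ≠ y ⟨1, h₁⟩ → x ≠ y := by
    rintro x y h rfl
    simp at h
  have h₀₀ : stdv d 0 ≠ 0 := hne (by simp [stdv])
  have h₁₀ : stdv d 1 ≠ 0 := hne (by simp [stdv])
  have h₁₂ : stdv d 1 ≠ stdv d 0 := hne (by simp [stdv])
  have h₂₀ : stdv d 0 + stdv d 1 ≠ 0 := hne (by simp [stdv])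
  rw [squareWalk, Walk.cons_isCycle_iff, Walk.isPath_def]
  simp [h₀₀, h₁₀, h₁₂, h₂₀]

lemma mem_support_squareWalk_iff (hd : 2 ≤ d) {b v : Vtx d} :
    v ∈ (squareWalk hd b).support ↔ ∃ k : Fin 4, v = (patternP' d).p k + b := by
  simp [squareWalk, patternP', Fin.exists_fin_succ]
  tauto

end Square

section Occurrences

variable {d M : ℕ} {ω : Fin M → Vtx d}

lemma eq_add_of_occursAt_patternP' {j : ℕ} (h : occursAt (patternP' d) ω j) :
    ∃ hj : j + 4 ≤ M, ∀ k (hk : k < 4),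
      ω ⟨j + k, by omega⟩ = (patternP' d).p ⟨k, hk⟩ + ω ⟨j, by omega⟩ := by
  obtain ⟨hj, v, hv⟩ := h
  have hv₀ : ω ⟨j, by omega⟩ = v := by simpa [patternP'] using hv 0
  exact ⟨hj, fun k hk => hv₀ ▸ hv ⟨k, hk⟩⟩

lemma exists_eq_of_mem_support_squareWalk (hd : 2 ≤ d) {i : Fin M}
    (hi : occursAt (patternP' d) ω i) {v : Vtx d} (hv : v ∈ (squareWalk hd (ω i)).support) :
    ∃ (k : ℕ) (hk : i + k < M), k < 4 ∧ ω ⟨i + k, hk⟩ = v := by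
  obtain ⟨hiM, hω⟩ := eq_add_of_occursAt_patternP' hi
  obtain ⟨k, rfl⟩ := (mem_support_squareWalk_iff hd).1 hv
  exact ⟨k, by omega, k.2, hω k k.2⟩

lemma add_four_le_of_occursAt_patternP' (hd : 2 ≤ d) (hω : Function.Injective ω) {j j' : ℕ}
    (hj : occursAt (patternP' d) ω j) (hj' : occursAt (patternP' d) ω j') (hlt : j < j') :
    j + 4 ≤ j' := by
  have h₀ : 0 < d := by omega
  have h₁ : 1 < d := by omega
  obtain ⟨hjM, hωj⟩ := eq_add_of_occursAt_patternP' hj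
  obtain ⟨hj'M, hωj'⟩ := eq_add_of_occursAt_patternP' hj'
  by_contra! hclose
  have hstep : ω ⟨j' + 1, by omega⟩ = stdv d 1 + ω ⟨j', by omega⟩ := by
    simpa [patternP'] using hωj' 1 (by norm_num)
  have c₁ : ω ⟨j + 1, by omega⟩ = stdv d 1 + ω ⟨j, by omega⟩ := by
    simpa [patternP'] using hωj 1 (by norm_num)
  have c₂ : ω ⟨j + 2, by omega⟩ = stdv d 0 + stdv d 1 + ω ⟨j, by omega⟩ := by
    simpa [patternP'] using hωj 2 (by norm_num)
  have c₃ : ω ⟨j + 3, by omega⟩ = stdv d 0 + ω ⟨j, by omega⟩ := by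
    simpa [patternP'] using hωj 3 (by norm_num)
  rcases (by omega : j' = j + 1 ∨ j' = j + 2 ∨ j' = j + 3) with rfl | rfl | rfl
  · have := congrFun (c₂.symm.trans (hstep.trans (by rw [c₁]))) ⟨0, h₀⟩
    simp [stdv] at this
  · have := congrFun (c₃.symm.trans (hstep.trans (by rw [c₂]))) ⟨1, h₁⟩
    simp [stdv] at this
    omega
  · have := hω ((hstep.trans (by rw [c₃]; abel)).trans c₂.symm)
    simp at this

open Classical in
lemma numOcc_eq_card_filter (Pat : SAWPattern d) (ω : Fin M → Vtx d) :
    numOcc Pat ω = (Finset.univ.filter fun i : Fin M => occursAt Pat ω i).card := by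
  have hset : {j : ℕ | occursAt Pat ω j}
      = Fin.val '' ((Finset.univ.filter fun i : Fin M => occursAt Pat ω i : Finset (Fin M)) :
        Set (Fin M)) := by
    ext j
    refine ⟨fun hj => ⟨⟨j, by obtain ⟨h, -⟩ := hj; omega⟩, by simpa using hj, rfl⟩, ?_⟩
    rintro ⟨i, hi, rfl⟩
    simpa using hi
  rw [numOcc, hset, Set.ncard_image_of_injective _ Fin.val_injective, Set.ncard_coe_finset]

lemma disjoint_verts_squareWalk (hd : 2 ≤ d) (hω : Function.Injective ω) {i i' : Fin M}
    (hi : occursAt (patternP' d) ω i) (hi' : occursAt (patternP' d) ω i') (hne : i ≠ i') :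
    Disjoint (squareWalk hd (ω i)).toSubgraph.verts (squareWalk hd (ω i')).toSubgraph.verts := by
  rw [Set.disjoint_left]
  intro v hv hv'
  obtain ⟨k, hk, hk4, rfl⟩ :=
    exists_eq_of_mem_support_squareWalk hd hi ((Walk.mem_verts_toSubgraph _).1 hv)
  obtain ⟨k', hk', hk'4, heq⟩ :=
    exists_eq_of_mem_support_squareWalk hd hi' ((Walk.mem_verts_toSubgraph _).1 hv')
  have hidx : (i' : ℕ) + k' = i + k := Fin.mk.inj_iff.1 (hω heq)
  rcases lt_or_gt_of_ne (Fin.val_ne_of_ne hne) with hlt | hlt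
  · have := add_four_le_of_occursAt_patternP' hd hω hi hi' hlt
    omega
  · have := add_four_le_of_occursAt_patternP' hd hω hi' hi hlt
    omega

theorem partitionZ_graphDiff_mul_pow_numOcc_le (hd : 2 ≤ d) {G P : (latticeGraph d).Subgraph}
    (hG : IsFiniteDomain G) (hPG : P ≤ G) (hω : Function.Injective ω)
    (hωP : ∀ i, ω i ∈ P.verts) {lam n : ℝ} (hlam : 0 ≤ lam) (hn : 0 ≤ n) :
    partitionZ lam n (graphDiff G P) * (1 + lam ^ 4 * n) ^ numOcc (patternP' d) ω
      ≤ partitionZ lam n G := by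
  classical
  set J := Finset.univ.filter fun i : Fin M => occursAt (patternP' d) ω i
  have hJ : ∀ i ∈ J, occursAt (patternP' d) ω i := fun i hi => (Finset.mem_filter.1 hi).2
  have hverts : ∀ i ∈ J, (squareWalk hd (ω i)).toSubgraph.verts ⊆ P.verts := by
    intro i hi v hv
    obtain ⟨k, hk, -, rfl⟩ :=
      exists_eq_of_mem_support_squareWalk hd (hJ i hi) ((Walk.mem_verts_toSubgraph _).1 hv)
    exact hωP _
  have key := partitionZ_graphDiff_mul_prod_le (P := P) (J := J) hG.1 hlam hn
    (fun i hi => toSubgraph_le_of_isFiniteDomain hG fun v hv =>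
      hPG.1 (hverts i hi ((Walk.mem_verts_toSubgraph _).2 hv)))
    (fun i _ => (squareWalk_isCycle hd _).degreeZeroOrTwo_toSubgraph)
    (fun i hi => (support_subset_verts _).trans (hverts i hi))
    (fun i _ => ⟨ω i, (Subgraph.mem_support _).2
      ⟨_, Walk.toSubgraph_adj_snd _ (squareWalk_isCycle hd _).not_nil⟩⟩)
    (fun i hi i' hi' hne => (disjoint_verts_squareWalk hd hω (hJ i hi) (hJ i' hi') hne).mono
      (support_subset_verts _) (support_subset_verts _))
  rwa [Finset.prod_congr rfl fun i _ => by rw [loopWt_toSubgraph_of_isCycle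
    (squareWalk_isCycle hd _), length_squareWalk], Finset.prod_const,
    ← numOcc_eq_card_filter] at key

end Occurrences

lemma numOcc_eq_zero_of_le_len {d M : ℕ} (Pat : SAWPattern d) (ω : Fin M → Vtx d)
    (hM : M ≤ Pat.len) : numOcc Pat ω = 0 := by
  have hempty : {j | occursAt Pat ω j} = ∅ := Set.eq_empty_of_forall_notMem fun j ⟨h, _⟩ => by
    omega
  rw [numOcc, hempty, Set.ncard_empty]

theorem partition_ratio_bound_general (d : ℕ) (hd : 2 ≤ d)
    (a : ℝ) (ha0 : 0 < a) (N : ℕ)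
    (f : (y : Vtx d) → (M : ℕ) → (latticeGraph d).Subgraph → Fin M → Vtx d)
    (hf : ∀ (y : Vtx d) (M : ℕ) (Q : (latticeGraph d).Subgraph),
      1 < M → IsSAP y M Q → Traces y M Q (f y M Q))
    (G : (latticeGraph d).Subgraph) (hG : IsFiniteDomain G)
    (x : Vtx d)
    (P : (latticeGraph d).Subgraph) (hP : IsSAP x N P) (hPG : P ≤ G)
    (hocc : a * (N : ℝ) ≤ (numOcc (patternP' d) (f x N P) : ℝ))
    (lam n : ℝ) (hlam : 0 < lam) (hn : 0 < n) :
    partitionZ lam n (graphDiff G P) / partitionZ lam n G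
      ≤ 1 / (1 + lam ^ 4 * n) ^ (a * (N : ℝ)) := by
  have hN : 1 < N := by
    rcases hP with ⟨rfl, -⟩ | ⟨hN, -⟩
    · rw [numOcc_eq_zero_of_le_len _ _ (by simp [patternP'])] at hocc
      norm_num at hocc
      linarith
    · omega
  obtain ⟨⟨-, hinj, -⟩, hrange, -⟩ := hf x N P hN hP
  have key := partitionZ_graphDiff_mul_pow_numOcc_le hd hG hPG hinj
    (fun i => (hrange _).2 ⟨i, rfl⟩) hlam.le hn.le
  have hZ : 0 < partitionZ lam n G := one_pos.trans_le (one_le_partitionZ hG.1 hlam.le hn.le)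
  have hZ' : 0 ≤ partitionZ lam n (graphDiff G P) :=
    zero_le_one.trans (one_le_partitionZ (hG.1.subset (graphDiff_le G P).1) hlam.le hn.le)
  have hpow : (1 + lam ^ 4 * n) ^ (a * (N : ℝ))
      ≤ (1 + lam ^ 4 * n) ^ numOcc (patternP' d) (f x N P) := by
    have h := Real.rpow_le_rpow_of_exponent_le (x := 1 + lam ^ 4 * n)
      (le_add_of_nonneg_right (by positivity)) hocc
    rwa [Real.rpow_natCast] at h
  rw [div_le_div_iff₀ hZ (by positivity), one_mul]
  exact (mul_le_mul_of_nonneg_left hpow hZ').trans key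

/-- If the pattern `P'` occurs at `aN` or more steps of the `N`-step self-avoiding polygon
`P ⊆ G`, then `Z_{λ,n}(G ∖ P) / Z_{λ,n}(G) ≤ (1 + λ⁴ n)^{-aN}`. -/
theorem partition_ratio_bound (d : ℕ) (hd : 2 ≤ d)
    (a : ℝ) (ha0 : 0 < a) (ha1 : a < 1) (N : ℕ)
    (f : (y : Vtx d) → (M : ℕ) → (latticeGraph d).Subgraph → Fin M → Vtx d)
    (hf : ∀ (y : Vtx d) (M : ℕ) (Q : (latticeGraph d).Subgraph),
      1 < M → IsSAP y M Q → Traces y M Q (f y M Q))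
    (G : (latticeGraph d).Subgraph) (hG : IsFiniteDomain G)
    (x : Vtx d) (hx : x ∈ G.verts)
    (P : (latticeGraph d).Subgraph) (hP : IsSAP x N P) (hPG : P ≤ G)
    (hocc : a * (N : ℝ) ≤ (numOcc (patternP' d) (f x N P) : ℝ))
    (lam n : ℝ) (hlam : 0 < lam) (hn : 0 < n) :
    partitionZ lam n (graphDiff G P) / partitionZ lam n G
      ≤ 1 / (1 + lam ^ 4 * n) ^ (a * (N : ℝ)) :=
  partition_ratio_bound_general d hd a ha0 N f hf G hG x P hP hPG hocc lam n hlam hn
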